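/- Let f : I → ℝ be continuous and y ∈ I, and suppose there is ε > 0 such that |ψ(x) − ψ(y)| ≤ |ψ(x) − ψ(z)| for all x ∈ (y−ε, y) ∩ I, z ∈ (y, y+ε) ∩ I (i.e., y is an M₁-point with witness ε). If there is x ∈ (y−ε, y) with f(x) > f(y), then the upper right Dini derivative of f at y satisfies D⁺f(y) ≤ (y − x)/(f(x) − f(y)). -/

import Mathlib

open Filter

/-- The natural parametrization of the graph of `f`, as a map into the Euclidean plane. -/
noncomputable def graphMap (f : ℝ → ℝ) (t : ℝ) : EuclideanSpace ℝ (Fin 2) := WithLp.toLp 2 ![t, f t]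

/-- Upper right Dini derivative of `f` at `y`, relative to `I`, with values in `EReal`. -/
noncomputable def diniSupR (f : ℝ → ℝ) (I : Set ℝ) (y : ℝ) : EReal :=
  limsup (fun t => (((f t - f y) / (t - y) : ℝ) : EReal)) (nhdsWithin y (Set.Ioi y ∩ I))

open Set Topology

/-
For `z` slightly to the right of `y`, the `M₁` inequality `|ψ x - ψ y| ≤ |ψ x - ψ z|`, squared and
expanded, reads `g (2A - g) ≤ h (2a + h)` with `h = z - y`, `g = f z - f y`, `a = y - x`,
`A = f x - f y`. Hence the difference quotient `g / h` is bounded by `(2a + h) / (2A - g)`, which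
tends to `a / A` as `z → y⁺` by continuity of `f`, and this bounds the `limsup`.
-/

lemma norm_graphMap_sub_sq (f : ℝ → ℝ) (u v : ℝ) :
    ‖graphMap f u - graphMap f v‖ ^ 2 = (u - v) ^ 2 + (f u - f v) ^ 2 := by
  rw [EuclideanSpace.norm_sq_eq]
  simp [graphMap, Fin.sum_univ_two]

lemma slope_le_of_norm_graphMap_sub_le {f : ℝ → ℝ} {x y z : ℝ} (hyz : y < z)
    (hfz : f z - f y < 2 * (f x - f y))
    (hM : ‖graphMap f x - graphMap f y‖ ≤ ‖graphMap f x - graphMap f z‖) :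
    (f z - f y) / (z - y) ≤ (z - y + 2 * (y - x)) / (2 * (f x - f y) - (f z - f y)) := by
  have hsq : (x - y) ^ 2 + (f x - f y) ^ 2 ≤ (x - z) ^ 2 + (f x - f z) ^ 2 := by
    rw [← norm_graphMap_sub_sq, ← norm_graphMap_sub_sq]
    exact pow_le_pow_left₀ (norm_nonneg _) hM 2
  rw [div_le_div_iff₀ (sub_pos.mpr hyz) (sub_pos.mpr hfz)]
  nlinarith [hsq]

lemma EReal.limsup_coe_le_of_eventually_le_of_tendsto {α : Type*} {l : Filter α} {u v : α → ℝ}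
    {c : ℝ} (huv : ∀ᶠ t in l, u t ≤ v t) (hv : Tendsto v l (𝓝 c)) :
    limsup (fun t => (u t : EReal)) l ≤ c := by
  rcases eq_or_neBot l with rfl | _
  · simp
  calc limsup (fun t => (u t : EReal)) l
      ≤ limsup (fun t => (v t : EReal)) l :=
        limsup_le_limsup (huv.mono fun _ h => EReal.coe_le_coe_iff.mpr h)
    _ = c := ((continuous_coe_real_ereal.tendsto c).comp hv).limsup_eq

theorem stmt_13_general (I : Set ℝ) (f : ℝ → ℝ) (hf : ContinuousOn f I)
    (y : ℝ) (hy : y ∈ I) (ε : ℝ)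
    (hM : ∀ x ∈ Set.Ioo (y - ε) y ∩ I, ∀ z ∈ Set.Ioo y (y + ε) ∩ I,
      ‖graphMap f x - graphMap f y‖ ≤ ‖graphMap f x - graphMap f z‖)
    (x : ℝ) (hx : x ∈ Set.Ioo (y - ε) y ∩ I) (hfx : f y < f x) :
    diniSupR f I y ≤ (((y - x) / (f x - f y) : ℝ) : EReal) := by
  have hA : 0 < f x - f y := sub_pos.mpr hfx
  set l := 𝓝[Ioi y ∩ I] y
  have hzl : Tendsto (fun z => z) l (𝓝 y) := nhdsWithin_le_nhds
  have hfl : Tendsto f l (𝓝 (f y)) :=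
    (hf y hy).mono_left (nhdsWithin_mono y inter_subset_right)
  refine EReal.limsup_coe_le_of_eventually_le_of_tendsto
    (v := fun z => (z - y + 2 * (y - x)) / (2 * (f x - f y) - (f z - f y))) ?_ ?_
  · have hright : ∀ᶠ z in l, z < y + ε :=
      hzl.eventually (Iio_mem_nhds (by linarith [hx.1.1, hx.1.2]))
    have hfz : ∀ᶠ z in l, f z - f y < 2 * (f x - f y) :=
      (hfl.sub_const (f y)).eventually (Iio_mem_nhds (by simpa using mul_pos two_pos hA))
    filter_upwards [self_mem_nhdsWithin, hright, hfz] with z ⟨hyz, hzI⟩ hzε hfz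
    exact slope_le_of_norm_graphMap_sub_le hyz hfz (hM x hx z ⟨⟨hyz, hzε⟩, hzI⟩)
  · have hlim : Tendsto (fun z => (z - y + 2 * (y - x)) / (2 * (f x - f y) - (f z - f y))) l
        (𝓝 ((y - y + 2 * (y - x)) / (2 * (f x - f y) - (f y - f y)))) :=
      ((hzl.sub_const y).add_const _).div ((hfl.sub_const (f y)).const_sub _)
        (by simpa using hA.ne')
    rwa [sub_self, sub_self, zero_add, sub_zero, mul_div_mul_left _ _ two_ne_zero] at hlim

/-- If `y ∈ I` is an `M₁`-point of the continuous function `f` with witness `ε`, and there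
is `x ∈ (y−ε, y) ∩ I` with `f x > f y`, then `D⁺f(y) ≤ (y − x)/(f x − f y)`. -/
theorem stmt_13 (I : Set ℝ) (hI : I.OrdConnected) (f : ℝ → ℝ) (hf : ContinuousOn f I)
    (y : ℝ) (hy : y ∈ I) (ε : ℝ) (hε : 0 < ε)
    (hM : ∀ x ∈ Set.Ioo (y - ε) y ∩ I, ∀ z ∈ Set.Ioo y (y + ε) ∩ I,
      ‖graphMap f x - graphMap f y‖ ≤ ‖graphMap f x - graphMap f z‖)
    (x : ℝ) (hx : x ∈ Set.Ioo (y - ε) y ∩ I) (hfx : f y < f x) :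
    diniSupR f I y ≤ (((y - x) / (f x - f y) : ℝ) : EReal) :=
  stmt_13_general I f hf y hy ε hM x hx hfx
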